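/- arXiv:1104.4258 — 4 statements merged into one kernel-verified Lean document; each statement's English description precedes it below -/
import Mathlib

section
/- Fix n, r > 0, ε > 0 and τ ∈ (0, T]. If ‖y(t)‖ ≤ r for all t ∈ [0, τ], then at least one of the following holds: (i) y(t) = x(t) for all t ∈ [0, τ]; (ii) ρ^{(s)} = 0 for all s ∈ [0, r + ε). -/
open MeasureTheory Filter Set

/-- Fix `r > 0`, `ε > 0` and `τ ∈ (0, T]`. If `‖y t‖ ≤ r` for all
`t ∈ [0, τ]`, then either `y = x` on `[0, τ]`, or `ρ⁽ˢ⁾ = 0` for all `s ∈ [0, r + ε)`. -/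
theorem stmt_0
    {E : Type*} [NormedAddCommGroup E] [NormedSpace ℝ E] [CompleteSpace E]
    (T : ℝ) (hT : 0 < T)
    (σ : ℝ) (hσ : σ ∈ Set.Ioc 0 T)
    (x : ℝ → E)
    (hxcont : ContinuousOn x (Set.Ico 0 σ))
    (hxcontT : σ = T → ContinuousOn x (Set.Icc 0 T))
    (hexpl : σ < T → ∀ M : ℝ, ∃ᶠ t in nhdsWithin σ (Set.Iio σ), M < ‖x t‖)
    (ρ : ℝ → ℝ)
    (hρ : ∀ s : ℝ, ρ s = sInf ({t : ℝ | t ∈ Set.Ioo 0 σ ∧ s < ‖x t‖} ∪ {T}))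
    (r ε : ℝ) (hr : 0 < r) (hε : 0 < ε)
    (τ : ℝ) (hτ : τ ∈ Set.Ioc 0 T)
    (y : ℝ → E) (hycont : ContinuousOn y (Set.Icc 0 T))
    (hyx : ∀ t ∈ Set.Icc 0 (ρ (r + ε)), y t = x t)
    (hbound : ∀ t ∈ Set.Icc 0 τ, ‖y t‖ ≤ r) :
    (∀ t ∈ Set.Icc 0 τ, y t = x t) ∨ (∀ s ∈ Set.Ico 0 (r + ε), ρ s = 0) := by

  set ρ' := ρ (r + ε) with hρ'
  by_cases hcase : τ ≤ ρ'
  · left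
    intro t ht
    exact hyx t ⟨ht.1, ht.2.trans hcase⟩
  push_neg at hcase
  exfalso
  have hρdef := hρ (r + ε)
  set S : Set ℝ := {t : ℝ | t ∈ Set.Ioo 0 σ ∧ r + ε < ‖x t‖} with hS
  have hlb : ∀ u ∈ S ∪ {T}, (0:ℝ) ≤ u := by
    rintro u (⟨⟨h1, _⟩, _⟩ | rfl)
    · exact h1.le
    · exact hT.le
  have hbdd : BddBelow (S ∪ {T}) := ⟨0, hlb⟩
  have hne : (S ∪ {T}).Nonempty := ⟨T, Or.inr rfl⟩
  have hρ0 : 0 ≤ ρ' := by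
    rw [hρ', hρdef]
    exact le_csInf hne hlb
  have hρT : ρ' < T := hcase.trans_le hτ.2
  have key : ∀ b, ρ' < b → b ≤ T → ∃ u ∈ S, ρ' ≤ u ∧ u < b := by
    intro b hb hbT
    have h1 : sInf (S ∪ {T}) < b := by rw [← hρdef]; exact hb
    obtain ⟨u, hu, hub⟩ := exists_lt_of_csInf_lt hne h1
    rcases hu with hu | hu
    · refine ⟨u, hu, ?_, hub⟩
      rw [hρ', hρdef]
      exact csInf_le hbdd (Or.inl hu)
    · rw [Set.mem_singleton_iff] at hu
      subst hu
      exact absurd hub (not_lt.2 hbT)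
  obtain ⟨u0, hu0S, hu0ρ, _⟩ := key T hρT le_rfl
  have hρσ : ρ' < σ := lt_of_le_of_lt hu0ρ hu0S.1.2
  have hcont : ContinuousWithinAt x (Set.Ico 0 σ) ρ' := hxcont ρ' ⟨hρ0, hρσ⟩
  have hxy : y ρ' = x ρ' := hyx ρ' ⟨hρ0, le_rfl⟩
  have hxr : ‖x ρ'‖ ≤ r := hxy ▸ hbound ρ' ⟨hρ0, hcase.le⟩
  have hev : ∀ᶠ t in nhdsWithin ρ' (Set.Ico 0 σ), ‖x t‖ < r + ε := by
    have hn : Filter.Tendsto (fun t => ‖x t‖) (nhdsWithin ρ' (Set.Ico 0 σ))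
        (nhds ‖x ρ'‖) := hcont.norm
    exact hn.eventually_lt_const (hxr.trans_lt (lt_add_of_pos_right r hε))
  rw [Filter.eventually_iff, Metric.mem_nhdsWithin_iff] at hev
  obtain ⟨δ, hδ, hball⟩ := hev
  obtain ⟨u, huS, huρ, hub⟩ := key (min (ρ' + δ) T)
    (lt_min (lt_add_of_pos_right _ hδ) hρT) (min_le_right _ _)
  have humem : u ∈ Metric.ball ρ' δ ∩ Set.Ico 0 σ := by
    constructor
    · rw [Metric.mem_ball, Real.dist_eq, abs_lt]
      constructor
      · linarith [hub.trans_le (min_le_left _ _)]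
      · linarith [hub.trans_le (min_le_left _ _)]
    · exact ⟨huS.1.1.le, huS.1.2⟩
  exact absurd (hball humem) (not_lt.2 huS.2.le)
end

section
/- For all r > 0 and ε > 0 one has, almost surely, liminf_{n→∞} ρ_n^{(r)} ≤ ρ_∞^{(r)} ≤ limsup_{n→∞} ρ_n^{(r+ε)}. -/
/-!
Work pathwise. If `ρ_∞^{(r)} < b`, some time `u < b` has `‖X_∞(u)‖ > r`, hence `‖X_∞(u)‖ > q`
for a radius `q > r` from a fixed countable family. At `a = ρ_∞^{(q)} ≤ u` the process
`X_∞^{(q)}` has norm at least `q`. Convergence in probability gives an a.s. convergent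
subsequence, so almost surely `X_n^{(q)}` is uniformly within `q - r` of `X_∞^{(q)}` for
infinitely many `n`; for those, `ρ_n^{(r)} > a` is impossible, since then `X_n(a) = X_n^{(q)}(a)`
would have norm `> r`. So `ρ_n^{(r)} < b` infinitely often. The upper bound is the same comparison
with the roles of `X_n` and `X_∞` exchanged, at radius `q = r + ε`.
-/

open MeasureTheory Filter Set Topology

noncomputable section

variable {E : Type*} [NormedAddCommGroup E]

def exitTime (T σ : ℝ) (f : ℝ → E) (r : ℝ) : ℝ :=
  sInf ({t : ℝ | t ∈ Ioo 0 σ ∧ r < ‖f t‖} ∪ {T})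

structure IsExplodingPath (T σ : ℝ) (f : ℝ → E) : Prop where
  mem_Ioc : σ ∈ Ioc 0 T
  continuousOn : ContinuousOn f (Ico 0 σ)
  frequently_lt_norm : σ < T → ∀ M : ℝ, ∃ᶠ t in 𝓝[<] σ, M < ‖f t‖

section exitTime

variable {T σ r q s t b : ℝ} {f : ℝ → E}

lemma bddBelow_exitTime_set : BddBelow ({t : ℝ | t ∈ Ioo 0 σ ∧ r < ‖f t‖} ∪ {T}) := by
  refine ⟨min 0 T, ?_⟩
  rintro t (⟨ht, -⟩ | rfl)
  exacts [(min_le_left _ _).trans ht.1.le, min_le_right _ _]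

lemma exitTime_nonneg (hT : 0 ≤ T) : 0 ≤ exitTime T σ f r :=
  le_csInf ⟨T, Or.inr rfl⟩ <| by
    rintro t (⟨ht, -⟩ | rfl)
    exacts [ht.1.le, hT]

lemma exitTime_le : exitTime T σ f r ≤ T :=
  csInf_le bddBelow_exitTime_set (Or.inr rfl)

lemma exitTime_le_of_mem (ht : t ∈ Ioo 0 σ) (hr : r < ‖f t‖) : exitTime T σ f r ≤ t :=
  csInf_le bddBelow_exitTime_set (Or.inl ⟨ht, hr⟩)

lemma exitTime_mono : Monotone (exitTime T σ f) := fun _ _ hqq' =>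
  csInf_le_csInf bddBelow_exitTime_set ⟨T, Or.inr rfl⟩
    (union_subset_union_left _ fun _ ht => ⟨ht.1, hqq'.trans_lt ht.2⟩)

lemma exists_lt_of_exitTime_lt (h : exitTime T σ f r < b) (hb : b ≤ T) :
    ∃ t ∈ Ioo 0 σ, r < ‖f t‖ ∧ t < b := by
  obtain ⟨t, ht | rfl, htb⟩ := exists_lt_of_csInf_lt ⟨T, Or.inr rfl⟩ h
  · exact ⟨t, ht.1, ht.2, htb⟩
  · exact absurd hb htb.not_ge

lemma le_norm_exitTime (hf : ContinuousOn f (Ico 0 σ)) (h : exitTime T σ f r < T) :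
    r ≤ ‖f (exitTime T σ f r)‖ := by
  set A := {t : ℝ | t ∈ Ioo 0 σ ∧ r < ‖f t‖}
  obtain ⟨u, hu, hru, -⟩ := exists_lt_of_exitTime_lt h le_rfl
  have hmem : exitTime T σ f r ∈ closure A := by
    have := csInf_mem_closure (s := A ∪ {T}) ⟨T, Or.inr rfl⟩ bddBelow_exitTime_set
    rw [closure_union, closure_singleton] at this
    exact this.resolve_right h.ne
  have hIco : exitTime T σ f r ∈ Ico 0 σ :=
    ⟨closure_minimal (fun t ht => ht.1.1.le) isClosed_Ici hmem,
      (exitTime_le_of_mem hu hru).trans_lt hu.2⟩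
  have := mem_closure_iff_nhdsWithin_neBot.1 hmem
  have hcont : Tendsto f (𝓝[A] exitTime T σ f r) (𝓝 (f (exitTime T σ f r))) :=
    ((hf _ hIco).mono fun t ht => Ioo_subset_Ico_self ht.1).tendsto
  exact ge_of_tendsto hcont.norm (eventually_mem_nhdsWithin.mono fun t ht => ht.2.le)

lemma exitTime_le_of_lt_norm (hσ : 0 < σ) (hf : ContinuousOn f (Ico 0 σ)) (hs : s ∈ Ico 0 σ)
    (hr : r < ‖f s‖) : exitTime T σ f r ≤ s := by
  have : (𝓝[Ioo 0 σ] s).NeBot := by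
    rw [← mem_closure_iff_nhdsWithin_neBot, closure_Ioo hσ.ne]
    exact Ico_subset_Icc_self hs
  have hnorm : ∀ᶠ t in 𝓝[Ioo 0 σ] s, r < ‖f t‖ :=
    ((hf s hs).mono Ioo_subset_Ico_self).norm.eventually (lt_mem_nhds hr)
  refine ge_of_tendsto (x := 𝓝[Ioo 0 σ] s) (tendsto_id.mono_left nhdsWithin_le_nhds) ?_
  filter_upwards [self_mem_nhdsWithin, hnorm] with t ht hrt using
    exitTime_le_of_mem (T := T) ht hrt

namespace IsExplodingPath

lemma exitTime_le_sigma (h : IsExplodingPath T σ f) : exitTime T σ f r ≤ σ := by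
  rcases h.mem_Ioc.2.eq_or_lt with hσT | hσT
  · exact hσT ▸ exitTime_le
  · obtain ⟨t, hrt, ht⟩ :=
      ((h.frequently_lt_norm hσT r).and_eventually (Ioo_mem_nhdsLT h.mem_Ioc.1)).exists
    exact (exitTime_le_of_mem ht hrt).trans ht.2.le

lemma norm_le_of_lt_exitTime (h : IsExplodingPath T σ f) (hs0 : 0 ≤ s)
    (hs : s < exitTime T σ f r) : ‖f s‖ ≤ r :=
  not_lt.1 fun hr => (exitTime_le_of_lt_norm h.mem_Ioc.1 h.continuousOn
    ⟨hs0, hs.trans_le h.exitTime_le_sigma⟩ hr).not_gt hs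

end IsExplodingPath

lemma exitTime_le_exitTime_of_forall_norm_sub_lt {σ₁ σ₂ : ℝ} {f₁ f₂ g₁ g₂ : ℝ → E}
    (hf₁ : ContinuousOn f₁ (Ico 0 σ₁)) (hf₂ : IsExplodingPath T σ₂ f₂) (hrq : r ≤ q)
    (hg₁ : ∀ t ∈ Icc 0 (exitTime T σ₁ f₁ q), g₁ t = f₁ t)
    (hg₂ : ∀ t ∈ Icc 0 (exitTime T σ₂ f₂ q), g₂ t = f₂ t)
    (hclose : ∀ t ∈ Icc 0 T, ‖g₁ t - g₂ t‖ < q - r) :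
    exitTime T σ₂ f₂ r ≤ exitTime T σ₁ f₁ q := by
  set a := exitTime T σ₁ f₁ q
  rcases (show a ≤ T from exitTime_le).eq_or_lt with haT | haT
  · exact haT ▸ exitTime_le
  by_contra! hlt
  have ha0 : 0 ≤ a := exitTime_nonneg (hf₂.mem_Ioc.1.le.trans hf₂.mem_Ioc.2)
  have hq : q ≤ ‖f₁ a‖ := le_norm_exitTime hf₁ haT
  have hr : ‖f₂ a‖ ≤ r := hf₂.norm_le_of_lt_exitTime ha0 hlt
  have hg₁a : g₁ a = f₁ a := hg₁ a ⟨ha0, le_rfl⟩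
  have hg₂a : g₂ a = f₂ a := hg₂ a ⟨ha0, hlt.le.trans (exitTime_mono hrq)⟩
  have hclose_a := hclose a ⟨ha0, haT.le⟩
  rw [hg₁a, hg₂a] at hclose_a
  linarith [norm_sub_norm_le (f₁ a) (f₂ a)]

end exitTime

section sequence

variable {T r q : ℝ} {σ : ℕ → ℝ} {σ' : ℝ} {f : ℕ → ℝ → E} {f' : ℝ → E}

lemma liminf_exitTime_le (hf : ∀ n, IsExplodingPath T (σ n) (f n))
    (hf' : IsExplodingPath T σ' f') {q : ℕ → ℝ} (hq : Tendsto q atTop (𝓝[>] r))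
    {g : ℕ → ℝ → ℝ → E} {g' : ℝ → ℝ → E}
    (hg : ∀ n m, ∀ t ∈ Icc 0 (exitTime T (σ n) (f n) (q m)), g n (q m) t = f n t)
    (hg' : ∀ m, ∀ t ∈ Icc 0 (exitTime T σ' f' (q m)), g' (q m) t = f' t)
    (hclose : ∀ m, ∃ᶠ n in atTop, ∀ t ∈ Icc 0 T, ‖g n (q m) t - g' (q m) t‖ < q m - r) :
    liminf (fun n => exitTime T (σ n) (f n) r) atTop ≤ exitTime T σ' f' r := by
  have hbdd : IsBoundedUnder (· ≥ ·) atTop fun n => exitTime T (σ n) (f n) r :=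
    isBoundedUnder_of ⟨0, fun n => exitTime_nonneg (hf'.mem_Ioc.1.le.trans hf'.mem_Ioc.2)⟩
  refine le_of_forall_gt_imp_ge_of_dense fun b hb => ?_
  rcases le_or_gt T b with hTb | hbT
  · exact (liminf_le_of_frequently_le (.of_forall fun _ => exitTime_le) hbdd).trans hTb
  obtain ⟨u, hu, hru, hub⟩ := exists_lt_of_exitTime_lt hb hbT.le
  obtain ⟨m, hrm, hmu⟩ := ((tendsto_nhdsWithin_iff.1 hq).2.and
    ((tendsto_nhdsWithin_iff.1 hq).1.eventually (gt_mem_nhds hru))).exists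
  refine liminf_le_of_frequently_le ((hclose m).mono fun n hn => ?_) hbdd
  calc exitTime T (σ n) (f n) r
      ≤ exitTime T σ' f' (q m) := exitTime_le_exitTime_of_forall_norm_sub_lt hf'.continuousOn
        (hf n) hrm.le (hg' m) (hg n m) fun t ht => by rw [norm_sub_rev]; exact hn t ht
    _ ≤ u := exitTime_le_of_mem hu hmu
    _ ≤ b := hub.le

lemma le_limsup_exitTime (hf : ∀ n, IsExplodingPath T (σ n) (f n))
    (hf' : IsExplodingPath T σ' f') (hrq : r ≤ q) {g : ℕ → ℝ → E} {g' : ℝ → E}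
    (hg : ∀ n, ∀ t ∈ Icc 0 (exitTime T (σ n) (f n) q), g n t = f n t)
    (hg' : ∀ t ∈ Icc 0 (exitTime T σ' f' q), g' t = f' t)
    (hclose : ∃ᶠ n in atTop, ∀ t ∈ Icc 0 T, ‖g n t - g' t‖ < q - r) :
    exitTime T σ' f' r ≤ limsup (fun n => exitTime T (σ n) (f n) q) atTop :=
  le_limsup_of_frequently_le
    (hclose.mono fun n hn => exitTime_le_exitTime_of_forall_norm_sub_lt (hf n).continuousOn hf'
      hrq (hg n) hg' hn)
    (isBoundedUnder_of ⟨T, fun _ => exitTime_le⟩)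

end sequence

lemma le_iSup_Icc_of_continuous {a b t : ℝ} {g : ℝ → ℝ} (hg : Continuous g)
    (ht : t ∈ Icc a b) : g t ≤ ⨆ s : Icc a b, g s :=
  le_ciSup (isCompact_range (hg.comp continuous_subtype_val)).bddAbove ⟨t, ht⟩

lemma MeasureTheory.TendstoInMeasure.ae_forall_frequently_lt {Ω : Type*} [MeasurableSpace Ω]
    {μ : Measure Ω} {F : ℕ → Ω → ℝ} (h : TendstoInMeasure μ F atTop fun _ => 0) :
    ∀ᵐ ω ∂μ, ∀ δ > 0, ∃ᶠ n in atTop, F n ω < δ := by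
  obtain ⟨φ, hφ, hae⟩ := h.exists_seq_tendsto_ae
  filter_upwards [hae] with ω hω δ hδ
  exact hφ.tendsto_atTop.frequently (hω.eventually_lt_const hδ).frequently

lemma ae_frequently_forall_norm_sub_lt {Ω : Type*} [MeasurableSpace Ω] {μ : Measure Ω}
    {T : ℝ} {g : ℕ → ℝ → Ω → E} {g' : ℝ → Ω → E}
    (hg : ∀ n ω, Continuous fun t => g n t ω) (hg' : ∀ ω, Continuous fun t => g' t ω)
    (h : TendstoInMeasure μ (fun n ω => ⨆ t : Icc (0:ℝ) T, ‖g n t ω - g' t ω‖) atTop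
      fun _ => 0) :
    ∀ᵐ ω ∂μ, ∀ δ > 0, ∃ᶠ n in atTop, ∀ t ∈ Icc 0 T, ‖g n t ω - g' t ω‖ < δ := by
  filter_upwards [h.ae_forall_frequently_lt] with ω hω δ hδ
  exact (hω δ hδ).mono fun n hn t ht =>
    (le_iSup_Icc_of_continuous ((hg n ω).sub (hg' ω)).norm ht).trans_lt hn

end

theorem stmt_1_general
    {Ω : Type*} [MeasurableSpace Ω] (P : Measure Ω)
    {E : Type*} [NormedAddCommGroup E]
    (T : ℝ)
    -- the explosion times σ_n (n ∈ ℕ) and σ_∞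
    (σ : ℕ → Ω → ℝ) (σi : Ω → ℝ)
    (hσmem : ∀ n ω, σ n ω ∈ Set.Ioc 0 T) (hσimem : ∀ ω, σi ω ∈ Set.Ioc 0 T)
    -- the processes X_n (n ∈ ℕ) and X_∞, jointly measurable
    (X : ℕ → ℝ → Ω → E) (Xi : ℝ → Ω → E)
    -- path continuity on [0, σ_n(ω)), and on [0,T] if σ_n(ω) = T
    (hXcont : ∀ n ω, ContinuousOn (fun t => X n t ω) (Set.Ico 0 (σ n ω)))
    (hXicont : ∀ ω, ContinuousOn (fun t => Xi t ω) (Set.Ico 0 (σi ω)))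
    -- σ_n is an explosion time: on {σ_n < T}, limsup_{t ↑ σ_n} ‖X_n(t)‖ = ∞
    (hexpl : ∀ n ω, σ n ω < T →
      ∀ M : ℝ, ∃ᶠ t in nhdsWithin (σ n ω) (Set.Iio (σ n ω)), M < ‖X n t ω‖)
    (hexpli : ∀ ω, σi ω < T →
      ∀ M : ℝ, ∃ᶠ t in nhdsWithin (σi ω) (Set.Iio (σi ω)), M < ‖Xi t ω‖)
    -- the stopping times ρ_n^{(r)} = inf { t ∈ (0, σ_n) : ‖X_n(t)‖ > r }, inf ∅ := T
    (ρ : ℕ → ℝ → Ω → ℝ) (ρi : ℝ → Ω → ℝ)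
    (hρ : ∀ n r ω, ρ n r ω = sInf ({t : ℝ | t ∈ Set.Ioo 0 (σ n ω) ∧ r < ‖X n t ω‖} ∪ {T}))
    (hρi : ∀ r ω, ρi r ω = sInf ({t : ℝ | t ∈ Set.Ioo 0 (σi ω) ∧ r < ‖Xi t ω‖} ∪ {T}))
    -- the globally defined processes X_n^{(r)} (denoted Y n r) and X_∞^{(r)} (denoted Yi r)
    (Y : ℕ → ℝ → ℝ → Ω → E) (Yi : ℝ → ℝ → Ω → E)
    (hYcont : ∀ n r ω, Continuous fun t => Y n r t ω)
    (hYicont : ∀ r ω, Continuous fun t => Yi r t ω)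
    -- assumption (a)
    (ha : ∀ n r, 0 < r → ∀ᵐ ω ∂P, ∀ t ∈ Set.Icc 0 (ρ n r ω), Y n r t ω = X n t ω)
    (hai : ∀ r, 0 < r → ∀ᵐ ω ∂P, ∀ t ∈ Set.Icc 0 (ρi r ω), Yi r t ω = Xi t ω)
    -- assumption (b): X_n^{(r)} → X_∞^{(r)} in L⁰(Ω; C([0,T]; E))
    (hb : ∀ r, 0 < r → TendstoInMeasure P
      (fun n ω => ⨆ t : Set.Icc (0:ℝ) T, ‖Y n r (t : ℝ) ω - Yi r (t : ℝ) ω‖)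
      atTop (fun _ => (0 : ℝ)))    :
    ∀ r > (0:ℝ), ∀ ε > (0:ℝ), ∀ᵐ ω ∂P,
      liminf (fun n => ρ n r ω) atTop ≤ ρi r ω ∧
      ρi r ω ≤ limsup (fun n => ρ n (r + ε) ω) atTop := by
  obtain rfl : ρ = fun n r ω => exitTime T (σ n ω) (X n · ω) r := by
    funext n r ω; exact hρ n r ω
  obtain rfl : ρi = fun r ω => exitTime T (σi ω) (Xi · ω) r := by
    funext r ω; exact hρi r ω
  intro r hr ε hε
  set q : ℕ → ℝ := fun m => r + 1 / ((m : ℝ) + 1)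
  have hrq : ∀ m, r < q m := fun m => lt_add_of_pos_right r Nat.one_div_pos_of_nat
  have hq : Tendsto q atTop (𝓝[>] r) := tendsto_nhdsWithin_iff.2
    ⟨by simpa [q] using tendsto_one_div_add_atTop_nhds_zero_nat.const_add r, .of_forall hrq⟩
  have hclose (c : ℝ) (hc : 0 < c) :=
    ae_frequently_forall_norm_sub_lt (hYcont · c) (hYicont c) (hb c hc)
  filter_upwards [ae_all_iff.2 fun m => hclose (q m) (hr.trans (hrq m)),
    hclose (r + ε) (by positivity),
    ae_all_iff.2 fun n => ae_all_iff.2 fun m => ha n (q m) (hr.trans (hrq m)),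
    ae_all_iff.2 fun m => hai (q m) (hr.trans (hrq m)),
    ae_all_iff.2 fun n => ha n (r + ε) (by positivity), hai (r + ε) (by positivity)]
    with ω hcloseq hcloseε hYq hYiq hYε hYiε
  have hpath n : IsExplodingPath T (σ n ω) (X n · ω) := ⟨hσmem n ω, hXcont n ω, hexpl n ω⟩
  have hpathi : IsExplodingPath T (σi ω) (Xi · ω) := ⟨hσimem ω, hXicont ω, hexpli ω⟩
  refine ⟨liminf_exitTime_le hpath hpathi hq (g := (Y · · · ω)) (g' := (Yi · · ω)) hYq hYiq
      fun m => hcloseq m _ (sub_pos.2 (hrq m)),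
    le_limsup_exitTime hpath hpathi (by linarith) hYε hYiε ?_⟩
  exact hcloseε _ (by linarith)

theorem stmt_1
    {Ω : Type*} [MeasurableSpace Ω] (P : Measure Ω) [IsProbabilityMeasure P]
    {E : Type*} [NormedAddCommGroup E] [NormedSpace ℝ E] [CompleteSpace E]
    [MeasurableSpace E] [BorelSpace E]
    (T : ℝ) (hT : 0 < T)
    -- the explosion times σ_n (n ∈ ℕ) and σ_∞
    (σ : ℕ → Ω → ℝ) (σi : Ω → ℝ)
    (hσmeas : ∀ n, Measurable (σ n)) (hσimeas : Measurable σi)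
    (hσmem : ∀ n ω, σ n ω ∈ Set.Ioc 0 T) (hσimem : ∀ ω, σi ω ∈ Set.Ioc 0 T)
    -- the processes X_n (n ∈ ℕ) and X_∞, jointly measurable
    (X : ℕ → ℝ → Ω → E) (Xi : ℝ → Ω → E)
    (hXmeas : ∀ n, Measurable fun p : ℝ × Ω => X n p.1 p.2)
    (hXimeas : Measurable fun p : ℝ × Ω => Xi p.1 p.2)
    -- path continuity on [0, σ_n(ω)), and on [0,T] if σ_n(ω) = T
    (hXcont : ∀ n ω, ContinuousOn (fun t => X n t ω) (Set.Ico 0 (σ n ω)))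
    (hXcontT : ∀ n ω, σ n ω = T → ContinuousOn (fun t => X n t ω) (Set.Icc 0 T))
    (hXicont : ∀ ω, ContinuousOn (fun t => Xi t ω) (Set.Ico 0 (σi ω)))
    (hXicontT : ∀ ω, σi ω = T → ContinuousOn (fun t => Xi t ω) (Set.Icc 0 T))
    -- σ_n is an explosion time: on {σ_n < T}, limsup_{t ↑ σ_n} ‖X_n(t)‖ = ∞
    (hexpl : ∀ n ω, σ n ω < T →
      ∀ M : ℝ, ∃ᶠ t in nhdsWithin (σ n ω) (Set.Iio (σ n ω)), M < ‖X n t ω‖)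
    (hexpli : ∀ ω, σi ω < T →
      ∀ M : ℝ, ∃ᶠ t in nhdsWithin (σi ω) (Set.Iio (σi ω)), M < ‖Xi t ω‖)
    -- the stopping times ρ_n^{(r)} = inf { t ∈ (0, σ_n) : ‖X_n(t)‖ > r }, inf ∅ := T
    (ρ : ℕ → ℝ → Ω → ℝ) (ρi : ℝ → Ω → ℝ)
    (hρ : ∀ n r ω, ρ n r ω = sInf ({t : ℝ | t ∈ Set.Ioo 0 (σ n ω) ∧ r < ‖X n t ω‖} ∪ {T}))
    (hρi : ∀ r ω, ρi r ω = sInf ({t : ℝ | t ∈ Set.Ioo 0 (σi ω) ∧ r < ‖Xi t ω‖} ∪ {T}))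
    -- the globally defined processes X_n^{(r)} (denoted Y n r) and X_∞^{(r)} (denoted Yi r)
    (Y : ℕ → ℝ → ℝ → Ω → E) (Yi : ℝ → ℝ → Ω → E)
    (hYmeas : ∀ n r, Measurable fun p : ℝ × Ω => Y n r p.1 p.2)
    (hYimeas : ∀ r, Measurable fun p : ℝ × Ω => Yi r p.1 p.2)
    (hYcont : ∀ n r ω, Continuous fun t => Y n r t ω)
    (hYicont : ∀ r ω, Continuous fun t => Yi r t ω)
    -- assumption (a)
    (ha : ∀ n r, 0 < r → ∀ᵐ ω ∂P, ∀ t ∈ Set.Icc 0 (ρ n r ω), Y n r t ω = X n t ω)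
    (hai : ∀ r, 0 < r → ∀ᵐ ω ∂P, ∀ t ∈ Set.Icc 0 (ρi r ω), Yi r t ω = Xi t ω)
    -- assumption (b): X_n^{(r)} → X_∞^{(r)} in L⁰(Ω; C([0,T]; E))
    (hb : ∀ r, 0 < r → TendstoInMeasure P
      (fun n ω => ⨆ t : Set.Icc (0:ℝ) T, ‖Y n r (t : ℝ) ω - Yi r (t : ℝ) ω‖)
      atTop (fun _ => (0 : ℝ)))    :
    ∀ r > (0:ℝ), ∀ ε > (0:ℝ), ∀ᵐ ω ∂P,
      liminf (fun n => ρ n r ω) atTop ≤ ρi r ω ∧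
      ρi r ω ≤ limsup (fun n => ρ n (r + ε) ω) atTop :=
  stmt_1_general P T σ σi hσmem hσimem X Xi hXcont hXicont hexpl hexpli ρ ρi hρ hρi Y Yi hYcont
    hYicont ha hai hb
end

section
/- For all r > 0 and ε > 0, every subsequence (n_k) of ℕ admits a further subsequence (n_{k_j}) such that, almost surely, limsup_{j→∞} ρ_{n_{k_j}}^{(r)} ≤ ρ_∞^{(r)} ≤ liminf_{j→∞} ρ_{n_{k_j}}^{(r+ε)}. -/
open MeasureTheory Filter Set Topology

/-!
Along a subsequence, `X_n^{(r+ε)} → X_∞^{(r+ε)}` uniformly on `[0, T]` almost surely, and the rest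
is pathwise. Up to its `(r+ε)`-exit time each path agrees with its `(r+ε)`-extension, and continuity
together with explosion makes exit levels attained: `‖X(ρ^{(R)})‖ ≥ R` whenever `ρ^{(R)} < T`.

Upper bound: the limit path exceeds `r` at times `u` arbitrarily soon after `ρ_∞^{(r)}` with
`u ≤ ρ_∞^{(r+ε)}`, so convergence at the single time `u` makes `X_n` exceed `r` by time `u` for
large `n`.
Lower bound: at `ρ_n^{(r+ε)} < T` the extension of `X_n` has norm at least `r + ε`, so once the
uniform distance is below `ε` the limit path exceeds `r` there, i.e. `ρ_∞^{(r)} ≤ ρ_n^{(r+ε)}`.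
-/

section

variable {E : Type*} [NormedAddCommGroup E]

noncomputable def firstExceedTime (T σ : ℝ) (x : ℝ → E) (R : ℝ) : ℝ :=
  sInf ({t : ℝ | t ∈ Ioo 0 σ ∧ R < ‖x t‖} ∪ {T})

section firstExceedTime

variable {T σ R t : ℝ} {x : ℝ → E}

lemma bddBelow_exceedSet (T σ : ℝ) (x : ℝ → E) (R : ℝ) :
    BddBelow ({t : ℝ | t ∈ Ioo 0 σ ∧ R < ‖x t‖} ∪ {T}) :=
  ⟨min 0 T, by
    rintro t (⟨⟨ht, -⟩, -⟩ | rfl)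
    exacts [(min_le_left _ _).trans ht.le, min_le_right _ _]⟩

lemma firstExceedTime_le_horizon : firstExceedTime T σ x R ≤ T :=
  csInf_le (bddBelow_exceedSet T σ x R) (Or.inr rfl)

lemma firstExceedTime_nonneg (hT : 0 ≤ T) : 0 ≤ firstExceedTime T σ x R :=
  le_csInf ⟨T, Or.inr rfl⟩ (by rintro t (⟨⟨ht, -⟩, -⟩ | rfl); exacts [ht.le, hT])

lemma firstExceedTime_le (ht : t ∈ Ioo 0 σ) (hR : R < ‖x t‖) : firstExceedTime T σ x R ≤ t :=
  csInf_le (bddBelow_exceedSet T σ x R) (Or.inl ⟨ht, hR⟩)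

lemma firstExceedTime_mono : Monotone (firstExceedTime T σ x) := fun R _ hRR' =>
  csInf_le_csInf (bddBelow_exceedSet T σ x R) ⟨T, Or.inr rfl⟩ <|
    union_subset_union_left _ fun _ ht => ⟨ht.1, hRR'.trans_lt ht.2⟩

lemma exists_lt_norm_of_firstExceedTime_lt {c : ℝ} (hc : firstExceedTime T σ x R < c)
    (hcT : c ≤ T) : ∃ s ∈ Ioo 0 σ, R < ‖x s‖ ∧ s < c := by
  obtain ⟨s, hs | rfl, hsc⟩ := exists_lt_of_csInf_lt ⟨T, Or.inr rfl⟩ hc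
  · exact ⟨s, hs.1, hs.2, hsc⟩
  · exact absurd hcT hsc.not_ge

lemma firstExceedTime_mem_closure (hT : firstExceedTime T σ x R < T) :
    firstExceedTime T σ x R ∈ closure {t | t ∈ Ioo 0 σ ∧ R < ‖x t‖} := by
  have := csInf_mem_closure ⟨T, Or.inr rfl⟩ (bddBelow_exceedSet T σ x R)
  rw [closure_union, closure_singleton] at this
  exact this.resolve_right hT.ne

end firstExceedTime

structure IsExplosionTime (T σ : ℝ) (x : ℝ → E) : Prop where
  mem_Ioc : σ ∈ Ioc 0 T
  continuousOn : ContinuousOn x (Ico 0 σ)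
  frequently_lt_norm : σ < T → ∀ M : ℝ, ∃ᶠ t in 𝓝[<] σ, M < ‖x t‖

namespace IsExplosionTime

variable {T σ R R' r t u c : ℝ} {x Y : ℝ → E}

lemma firstExceedTime_nonneg (h : IsExplosionTime T σ x) : 0 ≤ firstExceedTime T σ x R :=
  _root_.firstExceedTime_nonneg (h.mem_Ioc.1.le.trans h.mem_Ioc.2)

lemma lt_of_le_firstExceedTime (h : IsExplosionTime T σ x) (ht : t ≤ firstExceedTime T σ x R)
    (htT : t < T) : t < σ := by
  by_contra! hσt
  obtain ⟨s, hRs, hs⟩ := ((h.frequently_lt_norm (hσt.trans_lt htT) R).and_eventually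
    (Ioo_mem_nhdsLT h.mem_Ioc.1)).exists
  linarith [firstExceedTime_le (T := T) hs hRs, hs.2]

lemma firstExceedTime_le_of_lt_norm (h : IsExplosionTime T σ x) (ht0 : 0 ≤ t) (htσ : t < σ)
    (hR : R < ‖x t‖) : firstExceedTime T σ x R ≤ t := by
  have hnorm : Tendsto (fun s => ‖x s‖) (𝓝[>] t) (𝓝 ‖x t‖) := by
    rw [← nhdsWithin_Ioo_eq_nhdsGT htσ]
    exact ((h.continuousOn t ⟨ht0, htσ⟩).mono
      (Ioo_subset_Ico_self.trans (Ico_subset_Ico_left ht0))).norm.tendsto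
  refine ge_of_tendsto (tendsto_id.mono_left nhdsWithin_le_nhds : Tendsto id (𝓝[>] t) (𝓝 t)) ?_
  filter_upwards [hnorm.eventually_const_lt hR, Ioo_mem_nhdsGT htσ] with s hs hsσ
  exact firstExceedTime_le ⟨ht0.trans_lt hsσ.1, hsσ.2⟩ hs

lemma le_norm_firstExceedTime (h : IsExplosionTime T σ x) (hτ : firstExceedTime T σ x R < T) :
    R ≤ ‖x (firstExceedTime T σ x R)‖ := by
  have hτσ := h.lt_of_le_firstExceedTime le_rfl hτ
  have := mem_closure_iff_nhdsWithin_neBot.1 (firstExceedTime_mem_closure hτ)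
  have hsub : {t | t ∈ Ioo 0 σ ∧ R < ‖x t‖} ⊆ Ico 0 σ := fun s hs => Ioo_subset_Ico_self hs.1
  refine ge_of_tendsto
    ((h.continuousOn _ ⟨h.firstExceedTime_nonneg, hτσ⟩).mono hsub).norm.tendsto ?_
  filter_upwards [self_mem_nhdsWithin] with s hs using hs.2.le

lemma firstExceedTime_le_of_eqOn (h : IsExplosionTime T σ x)
    (hY : EqOn Y x (Icc 0 (firstExceedTime T σ x R'))) (hrR : r ≤ R') (hu0 : 0 ≤ u)
    (huT : u < T) (hu : r < ‖Y u‖) : firstExceedTime T σ x r ≤ u := by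
  rcases lt_or_ge (firstExceedTime T σ x R') u with hlt | hle
  · exact (firstExceedTime_mono hrR).trans hlt.le
  · rw [hY ⟨hu0, hle⟩] at hu
    exact h.firstExceedTime_le_of_lt_norm hu0 (h.lt_of_le_firstExceedTime hle huT) hu

lemma le_norm_of_eqOn (h : IsExplosionTime T σ x)
    (hY : EqOn Y x (Icc 0 (firstExceedTime T σ x R'))) (hτ : firstExceedTime T σ x R' < T) :
    R' ≤ ‖Y (firstExceedTime T σ x R')‖ := by
  rw [hY ⟨h.firstExceedTime_nonneg, le_rfl⟩]
  exact h.le_norm_firstExceedTime hτ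

lemma exists_lt_norm_of_eqOn (h : IsExplosionTime T σ x)
    (hY : EqOn Y x (Icc 0 (firstExceedTime T σ x R'))) (hrR : r < R')
    (hc : firstExceedTime T σ x r < c) (hcT : c ≤ T) : ∃ u ∈ Ico 0 c, r < ‖Y u‖ := by
  obtain ⟨s, hs, hrs, hsc⟩ := exists_lt_norm_of_firstExceedTime_lt hc hcT
  rcases le_or_gt s (firstExceedTime T σ x R') with hsτ | hτs
  · exact ⟨s, ⟨hs.1.le, hsc⟩, by rwa [hY ⟨hs.1.le, hsτ⟩]⟩
  · refine ⟨_, ⟨h.firstExceedTime_nonneg, hτs.trans hsc⟩, hrR.trans_le (h.le_norm_of_eqOn hY ?_)⟩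
    exact hτs.trans (hs.2.trans_le h.mem_Ioc.2)

end IsExplosionTime

section convergence

variable {T r R' σ' : ℝ} {σ : ℕ → ℝ} {x Y : ℕ → ℝ → E} {x' Y' : ℝ → E}

theorem limsup_firstExceedTime_le (hx : ∀ j, IsExplosionTime T (σ j) (x j))
    (hx' : IsExplosionTime T σ' x')
    (hY : ∀ j, EqOn (Y j) (x j) (Icc 0 (firstExceedTime T (σ j) (x j) R')))
    (hY' : EqOn Y' x' (Icc 0 (firstExceedTime T σ' x' R')))
    (hlim : ∀ t ∈ Ico 0 T, Tendsto (fun j => Y j t) atTop (𝓝 (Y' t))) (hrR : r < R') :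
    limsup (fun j => firstExceedTime T (σ j) (x j) r) atTop ≤ firstExceedTime T σ' x' r := by
  refine le_of_forall_gt_imp_ge_of_dense fun c hc => limsup_le_of_le
    (isCoboundedUnder_le_of_le atTop fun j => (hx j).firstExceedTime_nonneg) ?_
  rcases le_or_gt T c with hTc | hcT
  · exact Eventually.of_forall fun j => firstExceedTime_le_horizon.trans hTc
  obtain ⟨u, hu, hru⟩ := hx'.exists_lt_norm_of_eqOn hY' hrR hc hcT.le
  have huT : u < T := hu.2.trans hcT
  filter_upwards [(hlim u ⟨hu.1, huT⟩).norm.eventually_const_lt hru] with j hj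
  exact ((hx j).firstExceedTime_le_of_eqOn (hY j) hrR.le hu.1 huT hj).trans hu.2.le

theorem le_liminf_firstExceedTime (hx : ∀ j, IsExplosionTime T (σ j) (x j))
    (hx' : IsExplosionTime T σ' x')
    (hY : ∀ j, EqOn (Y j) (x j) (Icc 0 (firstExceedTime T (σ j) (x j) R')))
    (hY' : EqOn Y' x' (Icc 0 (firstExceedTime T σ' x' R')))
    (hlim : TendstoUniformlyOn Y Y' atTop (Icc 0 T)) (hrR : r < R') :
    firstExceedTime T σ' x' r ≤ liminf (fun j => firstExceedTime T (σ j) (x j) R') atTop := by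
  refine le_liminf_of_le (isCoboundedUnder_ge_of_le atTop fun j => firstExceedTime_le_horizon) ?_
  filter_upwards [Metric.tendstoUniformlyOn_iff.1 hlim _ (sub_pos.2 hrR)] with j hj
  by_contra! hlt
  set p := firstExceedTime T (σ j) (x j) R'
  have hp0 : 0 ≤ p := (hx j).firstExceedTime_nonneg
  have hpT : p < T := hlt.trans_le firstExceedTime_le_horizon
  have hR'p : R' ≤ ‖Y j p‖ := (hx j).le_norm_of_eqOn (hY j) hpT
  have hrp : r < ‖Y' p‖ := by
    have hdist := norm_sub_norm_le (Y j p) (Y' p)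
    rw [← dist_eq_norm, dist_comm] at hdist
    linarith [hj p ⟨hp0, hpT.le⟩]
  exact hlt.not_ge (hx'.firstExceedTime_le_of_eqOn hY' hrR.le hp0 hpT hrp)

end convergence

lemma tendstoUniformlyOn_of_tendsto_iSup_norm_sub {ι α : Type*} [TopologicalSpace α]
    {l : Filter ι} {K : Set α} (hK : IsCompact K) {F : ι → α → E} {f : α → E}
    (hF : ∀ i, ContinuousOn (F i) K) (hf : ContinuousOn f K)
    (h : Tendsto (fun i => ⨆ t : K, ‖F i t - f t‖) l (𝓝 0)) : TendstoUniformlyOn F f l K := by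
  have : CompactSpace K := isCompact_iff_compactSpace.1 hK
  refine Metric.tendstoUniformlyOn_iff.2 fun δ hδ => ?_
  filter_upwards [h.eventually_lt_const hδ] with i hi t ht
  rw [dist_comm, dist_eq_norm]
  refine lt_of_le_of_lt ?_ hi
  exact le_ciSup (f := fun t : K => ‖F i t - f t‖)
    (isCompact_range ((hF i).domRestrict.sub hf.domRestrict).norm).bddAbove ⟨t, ht⟩
end

theorem stmt_2_general
    {Ω : Type*} [MeasurableSpace Ω] (P : Measure Ω)
    {E : Type*} [NormedAddCommGroup E]
    (T : ℝ)
    -- the explosion times σ_n (n ∈ ℕ) and σ_∞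
    (σ : ℕ → Ω → ℝ) (σi : Ω → ℝ)
    (hσmem : ∀ n ω, σ n ω ∈ Set.Ioc 0 T) (hσimem : ∀ ω, σi ω ∈ Set.Ioc 0 T)
    -- the processes X_n (n ∈ ℕ) and X_∞, jointly measurable
    (X : ℕ → ℝ → Ω → E) (Xi : ℝ → Ω → E)
    -- path continuity on [0, σ_n(ω)), and on [0,T] if σ_n(ω) = T
    (hXcont : ∀ n ω, ContinuousOn (fun t => X n t ω) (Set.Ico 0 (σ n ω)))
    (hXicont : ∀ ω, ContinuousOn (fun t => Xi t ω) (Set.Ico 0 (σi ω)))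
    -- σ_n is an explosion time: on {σ_n < T}, limsup_{t ↑ σ_n} ‖X_n(t)‖ = ∞
    (hexpl : ∀ n ω, σ n ω < T →
      ∀ M : ℝ, ∃ᶠ t in nhdsWithin (σ n ω) (Set.Iio (σ n ω)), M < ‖X n t ω‖)
    (hexpli : ∀ ω, σi ω < T →
      ∀ M : ℝ, ∃ᶠ t in nhdsWithin (σi ω) (Set.Iio (σi ω)), M < ‖Xi t ω‖)
    -- the stopping times ρ_n^{(r)} = inf { t ∈ (0, σ_n) : ‖X_n(t)‖ > r }, inf ∅ := T
    (ρ : ℕ → ℝ → Ω → ℝ) (ρi : ℝ → Ω → ℝ)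
    (hρ : ∀ n r ω, ρ n r ω = sInf ({t : ℝ | t ∈ Set.Ioo 0 (σ n ω) ∧ r < ‖X n t ω‖} ∪ {T}))
    (hρi : ∀ r ω, ρi r ω = sInf ({t : ℝ | t ∈ Set.Ioo 0 (σi ω) ∧ r < ‖Xi t ω‖} ∪ {T}))
    -- the globally defined processes X_n^{(r)} (denoted Y n r) and X_∞^{(r)} (denoted Yi r)
    (Y : ℕ → ℝ → ℝ → Ω → E) (Yi : ℝ → ℝ → Ω → E)
    (hYcont : ∀ n r ω, Continuous fun t => Y n r t ω)
    (hYicont : ∀ r ω, Continuous fun t => Yi r t ω)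
    -- assumption (a)
    (ha : ∀ n r, 0 < r → ∀ᵐ ω ∂P, ∀ t ∈ Set.Icc 0 (ρ n r ω), Y n r t ω = X n t ω)
    (hai : ∀ r, 0 < r → ∀ᵐ ω ∂P, ∀ t ∈ Set.Icc 0 (ρi r ω), Yi r t ω = Xi t ω)
    -- assumption (b): X_n^{(r)} → X_∞^{(r)} in L⁰(Ω; C([0,T]; E))
    (hb : ∀ r, 0 < r → TendstoInMeasure P
      (fun n ω => ⨆ t : Set.Icc (0:ℝ) T, ‖Y n r (t : ℝ) ω - Yi r (t : ℝ) ω‖)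
      atTop (fun _ => (0 : ℝ)))    :
    ∀ r > (0:ℝ), ∀ ε > (0:ℝ), ∀ n : ℕ → ℕ, StrictMono n →
      ∃ k : ℕ → ℕ, StrictMono k ∧ ∀ᵐ ω ∂P,
        limsup (fun j => ρ (n (k j)) r ω) atTop ≤ ρi r ω ∧
        ρi r ω ≤ liminf (fun j => ρ (n (k j)) (r + ε) ω) atTop := by
  intro r hr ε hε n hn
  obtain rfl : ρ = fun n r ω => firstExceedTime T (σ n ω) (fun t => X n t ω) r := funext₃ hρ
  obtain rfl : ρi = fun r ω => firstExceedTime T (σi ω) (fun t => Xi t ω) r := funext₂ hρi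
  have hR : 0 < r + ε := by positivity
  obtain ⟨k, hk, hconv⟩ := TendstoInMeasure.exists_seq_tendsto_ae
    fun δ hδ => (hb (r + ε) hR δ hδ).comp hn.tendsto_atTop
  refine ⟨k, hk, ?_⟩
  filter_upwards [hconv, ae_all_iff.2 fun j => ha (n (k j)) (r + ε) hR, hai (r + ε) hR]
    with ω hω hY hY'
  have hpath : ∀ m, IsExplosionTime T (σ m ω) (fun t => X m t ω) :=
    fun m => ⟨hσmem m ω, hXcont m ω, hexpl m ω⟩
  have hpath' : IsExplosionTime T (σi ω) (fun t => Xi t ω) := ⟨hσimem ω, hXicont ω, hexpli ω⟩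
  have hunif : TendstoUniformlyOn (fun j t => Y (n (k j)) (r + ε) t ω) (fun t => Yi (r + ε) t ω)
      atTop (Icc 0 T) :=
    tendstoUniformlyOn_of_tendsto_iSup_norm_sub isCompact_Icc
      (fun j => (hYcont _ _ ω).continuousOn) (hYicont _ ω).continuousOn hω
  have hrR : r < r + ε := lt_add_of_pos_right r hε
  exact ⟨limsup_firstExceedTime_le (fun j => hpath _) hpath' hY hY'
      (fun t ht => hunif.tendsto_at (Ico_subset_Icc_self ht)) hrR,
    le_liminf_firstExceedTime (fun j => hpath _) hpath' hY hY' hunif hrR⟩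

theorem stmt_2
    {Ω : Type*} [MeasurableSpace Ω] (P : Measure Ω) [IsProbabilityMeasure P]
    {E : Type*} [NormedAddCommGroup E] [NormedSpace ℝ E] [CompleteSpace E]
    [MeasurableSpace E] [BorelSpace E]
    (T : ℝ) (hT : 0 < T)
    -- the explosion times σ_n (n ∈ ℕ) and σ_∞
    (σ : ℕ → Ω → ℝ) (σi : Ω → ℝ)
    (hσmeas : ∀ n, Measurable (σ n)) (hσimeas : Measurable σi)
    (hσmem : ∀ n ω, σ n ω ∈ Set.Ioc 0 T) (hσimem : ∀ ω, σi ω ∈ Set.Ioc 0 T)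
    -- the processes X_n (n ∈ ℕ) and X_∞, jointly measurable
    (X : ℕ → ℝ → Ω → E) (Xi : ℝ → Ω → E)
    (hXmeas : ∀ n, Measurable fun p : ℝ × Ω => X n p.1 p.2)
    (hXimeas : Measurable fun p : ℝ × Ω => Xi p.1 p.2)
    -- path continuity on [0, σ_n(ω)), and on [0,T] if σ_n(ω) = T
    (hXcont : ∀ n ω, ContinuousOn (fun t => X n t ω) (Set.Ico 0 (σ n ω)))
    (hXcontT : ∀ n ω, σ n ω = T → ContinuousOn (fun t => X n t ω) (Set.Icc 0 T))
    (hXicont : ∀ ω, ContinuousOn (fun t => Xi t ω) (Set.Ico 0 (σi ω)))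
    (hXicontT : ∀ ω, σi ω = T → ContinuousOn (fun t => Xi t ω) (Set.Icc 0 T))
    -- σ_n is an explosion time: on {σ_n < T}, limsup_{t ↑ σ_n} ‖X_n(t)‖ = ∞
    (hexpl : ∀ n ω, σ n ω < T →
      ∀ M : ℝ, ∃ᶠ t in nhdsWithin (σ n ω) (Set.Iio (σ n ω)), M < ‖X n t ω‖)
    (hexpli : ∀ ω, σi ω < T →
      ∀ M : ℝ, ∃ᶠ t in nhdsWithin (σi ω) (Set.Iio (σi ω)), M < ‖Xi t ω‖)
    -- the stopping times ρ_n^{(r)} = inf { t ∈ (0, σ_n) : ‖X_n(t)‖ > r }, inf ∅ := T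
    (ρ : ℕ → ℝ → Ω → ℝ) (ρi : ℝ → Ω → ℝ)
    (hρ : ∀ n r ω, ρ n r ω = sInf ({t : ℝ | t ∈ Set.Ioo 0 (σ n ω) ∧ r < ‖X n t ω‖} ∪ {T}))
    (hρi : ∀ r ω, ρi r ω = sInf ({t : ℝ | t ∈ Set.Ioo 0 (σi ω) ∧ r < ‖Xi t ω‖} ∪ {T}))
    -- the globally defined processes X_n^{(r)} (denoted Y n r) and X_∞^{(r)} (denoted Yi r)
    (Y : ℕ → ℝ → ℝ → Ω → E) (Yi : ℝ → ℝ → Ω → E)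
    (hYmeas : ∀ n r, Measurable fun p : ℝ × Ω => Y n r p.1 p.2)
    (hYimeas : ∀ r, Measurable fun p : ℝ × Ω => Yi r p.1 p.2)
    (hYcont : ∀ n r ω, Continuous fun t => Y n r t ω)
    (hYicont : ∀ r ω, Continuous fun t => Yi r t ω)
    -- assumption (a)
    (ha : ∀ n r, 0 < r → ∀ᵐ ω ∂P, ∀ t ∈ Set.Icc 0 (ρ n r ω), Y n r t ω = X n t ω)
    (hai : ∀ r, 0 < r → ∀ᵐ ω ∂P, ∀ t ∈ Set.Icc 0 (ρi r ω), Yi r t ω = Xi t ω)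
    -- assumption (b): X_n^{(r)} → X_∞^{(r)} in L⁰(Ω; C([0,T]; E))
    (hb : ∀ r, 0 < r → TendstoInMeasure P
      (fun n ω => ⨆ t : Set.Icc (0:ℝ) T, ‖Y n r (t : ℝ) ω - Yi r (t : ℝ) ω‖)
      atTop (fun _ => (0 : ℝ)))    :
    ∀ r > (0:ℝ), ∀ ε > (0:ℝ), ∀ n : ℕ → ℕ, StrictMono n →
      ∃ k : ℕ → ℕ, StrictMono k ∧ ∀ᵐ ω ∂P,
        limsup (fun j => ρ (n (k j)) r ω) atTop ≤ ρi r ω ∧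
        ρi r ω ≤ liminf (fun j => ρ (n (k j)) (r + ε) ω) atTop :=
  stmt_2_general P T σ σi hσmem hσimem X Xi hXcont hXicont hexpl hexpli ρ ρi hρ hρi Y Yi hYcont
    hYicont ha hai hb
end

section
/- For all r > 0 and ε > 0, the random variables sup_{t ∈ [0,T]} ‖ X_n(t) · 𝟙_{[0, ρ_∞^{(r)} ∧ ρ_n^{(r+ε)}]}(t) − X_∞(t) · 𝟙_{[0, ρ_∞^{(r)}]}(t) ‖ converge to 0 in probability as n → ∞. -/
/-!
On the event where (a) holds at level `r + ε`, suppose `sup ‖X_n^{(r+ε)} - X_∞^{(r+ε)}‖ < ε`.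
Then `ρ_∞^{(r)} ≤ ρ_n^{(r+ε)}`: otherwise, at the time `ρ_n^{(r+ε)} < ρ_∞^{(r)}`, continuity gives
`‖X_n‖ ≥ r + ε` while `‖X_∞‖ ≤ r`, so the two processes would be at least `ε` apart. Hence on
`[0, ρ_∞^{(r)}]` both stopped processes agree with the `(r + ε)`-localised ones, and the supremum in
question is dominated by `sup ‖X_n^{(r+ε)} - X_∞^{(r+ε)}‖`, which tends to `0` in probability.
-/

open MeasureTheory Filter Set Topology

noncomputable def exceedanceTime {E : Type*} [NormedAddCommGroup E] (f : ℝ → E) (σ a T : ℝ) :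
    ℝ :=
  sInf ({t | t ∈ Ioo 0 σ ∧ a < ‖f t‖} ∪ {T})

section exceedanceTime

variable {E : Type*} [NormedAddCommGroup E] {f : ℝ → E} {σ a b s T : ℝ}

private lemma zero_mem_lowerBounds_exceedance (hT : 0 ≤ T) :
    0 ∈ lowerBounds ({t | t ∈ Ioo 0 σ ∧ a < ‖f t‖} ∪ {T}) := by
  rintro t (⟨ht, -⟩ | rfl)
  exacts [ht.1.le, hT]

private lemma bddBelow_exceedance (hT : 0 ≤ T) :
    BddBelow ({t | t ∈ Ioo 0 σ ∧ a < ‖f t‖} ∪ {T}) :=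
  ⟨0, zero_mem_lowerBounds_exceedance hT⟩

lemma exceedanceTime_nonneg (hT : 0 ≤ T) : 0 ≤ exceedanceTime f σ a T :=
  le_csInf ⟨T, Or.inr rfl⟩ (zero_mem_lowerBounds_exceedance hT)

lemma exceedanceTime_le (hT : 0 ≤ T) : exceedanceTime f σ a T ≤ T :=
  csInf_le (bddBelow_exceedance hT) (Or.inr rfl)

lemma exceedanceTime_le_of_lt_norm (hT : 0 ≤ T) (hs : s ∈ Ioo 0 σ) (has : a < ‖f s‖) :
    exceedanceTime f σ a T ≤ s :=
  csInf_le (bddBelow_exceedance hT) (Or.inl ⟨hs, has⟩)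

lemma exceedanceTime_mono (hT : 0 ≤ T) (hab : a ≤ b) :
    exceedanceTime f σ a T ≤ exceedanceTime f σ b T := by
  refine csInf_le_csInf (bddBelow_exceedance hT) ⟨T, Or.inr rfl⟩ ?_
  rintro t (⟨ht, hbt⟩ | rfl)
  exacts [Or.inl ⟨ht, hab.trans_lt hbt⟩, Or.inr rfl]

lemma exceedanceTime_lt_explosionTime_of_frequently (hσ : σ ∈ Ioc 0 T)
    (hexpl : ∀ M : ℝ, ∃ᶠ t in 𝓝[<] σ, M < ‖f t‖) : exceedanceTime f σ a T < σ := by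
  have hIoo : ∀ᶠ t in 𝓝[<] σ, t ∈ Ioo 0 σ := Ioo_mem_nhdsLT hσ.1
  obtain ⟨t, hat, ht⟩ := ((hexpl a).and_eventually hIoo).exists
  exact (exceedanceTime_le_of_lt_norm (hσ.1.trans_le hσ.2).le ht hat).trans_lt ht.2

variable (hσ : σ ∈ Ioc 0 T) (hexpl : σ < T → ∀ M : ℝ, ∃ᶠ t in 𝓝[<] σ, M < ‖f t‖)
include hσ hexpl

lemma exceedanceTime_lt_explosionTime_of_lt (h : exceedanceTime f σ a T < T) :
    exceedanceTime f σ a T < σ := by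
  rcases hσ.2.eq_or_lt with hσT | hσT
  · exact hσT ▸ h
  · exact exceedanceTime_lt_explosionTime_of_frequently hσ (hexpl hσT)

lemma exceedanceTime_le_explosionTime : exceedanceTime f σ a T ≤ σ := by
  rcases hσ.2.eq_or_lt with hσT | hσT
  · exact (exceedanceTime_le (hσ.1.trans_le hσ.2).le).trans hσT.ge
  · exact (exceedanceTime_lt_explosionTime_of_frequently hσ (hexpl hσT)).le

variable (hf : ContinuousOn f (Ico 0 σ))
include hf

lemma norm_le_of_lt_exceedanceTime (hs : s ∈ Ico 0 (exceedanceTime f σ a T)) : ‖f s‖ ≤ a := by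
  set τ := exceedanceTime f σ a T
  have hT : 0 ≤ T := (hσ.1.trans_le hσ.2).le
  have hτσ : τ ≤ σ := exceedanceTime_le_explosionTime hσ hexpl
  have hsub : Ioo 0 τ ⊆ Ico 0 σ := fun t ht => ⟨ht.1.le, ht.2.trans_le hτσ⟩
  have hbelow : (‖f ·‖) '' Ioo 0 τ ⊆ Iic a := by
    rintro _ ⟨t, ht, rfl⟩
    exact not_lt.1 fun hat =>
      (exceedanceTime_le_of_lt_norm hT ⟨ht.1, ht.2.trans_le hτσ⟩ hat).not_gt ht.2
  have hcont : ContinuousWithinAt (‖f ·‖) (Ioo 0 τ) s :=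
    ((hf s ⟨hs.1, hs.2.trans_le hτσ⟩).mono hsub).norm
  have hs_cl : s ∈ closure (Ioo 0 τ) := by
    rw [closure_Ioo (hs.1.trans_lt hs.2).ne]
    exact Ico_subset_Icc_self hs
  exact isClosed_Iic.closure_subset_iff.2 hbelow (hcont.mem_closure_image hs_cl)

lemma le_norm_exceedanceTime (h : exceedanceTime f σ a T < T) :
    a ≤ ‖f (exceedanceTime f σ a T)‖ := by
  set S := {t | t ∈ Ioo 0 σ ∧ a < ‖f t‖}
  have hT : 0 ≤ T := (hσ.1.trans_le hσ.2).le
  have hτ_cl : exceedanceTime f σ a T ∈ closure S := by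
    have := csInf_mem_closure ⟨T, Or.inr rfl⟩ (bddBelow_exceedance (f := f) (σ := σ) (a := a) hT)
    rw [closure_union, closure_singleton] at this
    exact this.resolve_right h.ne
  have hsub : S ⊆ Ico 0 σ := fun t ht => Ioo_subset_Ico_self ht.1
  have habove : (‖f ·‖) '' S ⊆ Ici a := by
    rintro _ ⟨t, ht, rfl⟩
    exact ht.2.le
  have hτ : exceedanceTime f σ a T ∈ Ico 0 σ :=
    ⟨exceedanceTime_nonneg hT, exceedanceTime_lt_explosionTime_of_lt hσ hexpl h⟩
  have hcont : ContinuousWithinAt (‖f ·‖) S (exceedanceTime f σ a T) :=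
    ((hf _ hτ).mono hsub).norm
  exact isClosed_Ici.closure_subset_iff.2 habove (hcont.mem_closure_image hτ_cl)

end exceedanceTime

section Comparison

variable {E : Type*} [NormedAddCommGroup E] {x xi y yi : ℝ → E} {σ σi a ε T : ℝ}

lemma norm_indicator_sub_indicator_le {s : Set ℝ} (hy : EqOn y x s) (hyi : EqOn yi xi s)
    (t : ℝ) : ‖s.indicator x t - s.indicator xi t‖ ≤ ‖y t - yi t‖ := by
  by_cases ht : t ∈ s
  · rw [indicator_of_mem ht, indicator_of_mem ht, hy ht, hyi ht]
  · rw [indicator_of_notMem ht, indicator_of_notMem ht, sub_zero, norm_zero]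
    exact norm_nonneg _

variable (hσ : σ ∈ Ioc 0 T) (hx : ContinuousOn x (Ico 0 σ))
  (hxe : σ < T → ∀ M : ℝ, ∃ᶠ t in 𝓝[<] σ, M < ‖x t‖)
  (hσi : σi ∈ Ioc 0 T) (hxi : ContinuousOn xi (Ico 0 σi))
  (hxie : σi < T → ∀ M : ℝ, ∃ᶠ t in 𝓝[<] σi, M < ‖xi t‖)
  (hyx : ∀ t ∈ Icc 0 (exceedanceTime x σ (a + ε) T), y t = x t)
  (hyxi : ∀ t ∈ Icc 0 (exceedanceTime xi σi (a + ε) T), yi t = xi t)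
include hσ hx hxe hσi hxi hxie hyx hyxi

lemma exceedanceTime_le_exceedanceTime_add (hclose : ∀ t ∈ Icc 0 T, ‖y t - yi t‖ < ε) :
    exceedanceTime xi σi a T ≤ exceedanceTime x σ (a + ε) T := by
  set τ := exceedanceTime x σ (a + ε) T
  have hT : 0 ≤ T := (hσ.1.trans_le hσ.2).le
  have hε : 0 ≤ ε := (norm_nonneg _).trans (hclose 0 ⟨le_rfl, hT⟩).le
  by_contra! hlt
  have hτ0 : 0 ≤ τ := exceedanceTime_nonneg hT
  have hτT : τ < T := hlt.trans_le (exceedanceTime_le hT)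
  have hxτ : a + ε ≤ ‖x τ‖ := le_norm_exceedanceTime hσ hxe hx hτT
  have hxiτ : ‖xi τ‖ ≤ a := norm_le_of_lt_exceedanceTime hσi hxie hxi ⟨hτ0, hlt⟩
  have hyτ : y τ = x τ := hyx τ ⟨hτ0, le_rfl⟩
  have hyiτ : yi τ = xi τ :=
    hyxi τ ⟨hτ0, hlt.le.trans (exceedanceTime_mono hT (le_add_of_nonneg_right hε))⟩
  have hcloseτ := hclose τ ⟨hτ0, hτT.le⟩
  rw [hyτ, hyiτ] at hcloseτ
  linarith [norm_sub_norm_le (x τ) (xi τ)]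

lemma iSup_norm_indicator_sub_le (hy : ContinuousOn y (Icc 0 T))
    (hyi : ContinuousOn yi (Icc 0 T)) (hsup : ⨆ t : Icc (0 : ℝ) T, ‖y t - yi t‖ < ε) :
    ⨆ t : Icc (0 : ℝ) T,
        ‖(Icc 0 (min (exceedanceTime xi σi a T) (exceedanceTime x σ (a + ε) T))).indicator x t
          - (Icc 0 (exceedanceTime xi σi a T)).indicator xi t‖
      ≤ ⨆ t : Icc (0 : ℝ) T, ‖y t - yi t‖ := by
  have hT : 0 ≤ T := (hσ.1.trans_le hσ.2).le
  have hbdd : BddAbove (range fun t : Icc (0 : ℝ) T => ‖y t - yi t‖) := by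
    have := isCompact_Icc.bddAbove_image (hy.sub hyi).norm
    rwa [image_eq_range] at this
  have hclose : ∀ t ∈ Icc 0 T, ‖y t - yi t‖ < ε :=
    fun t ht => (le_ciSup hbdd ⟨t, ht⟩).trans_lt hsup
  have hε : 0 ≤ ε := (norm_nonneg _).trans (hclose 0 ⟨le_rfl, hT⟩).le
  have hle := exceedanceTime_le_exceedanceTime_add hσ hx hxe hσi hxi hxie hyx hyxi hclose
  rw [min_eq_left hle]
  refine ciSup_mono hbdd fun t => norm_indicator_sub_indicator_le ?_ ?_ t
  · exact fun s hs => hyx s ⟨hs.1, hs.2.trans hle⟩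
  · exact fun s hs =>
      hyxi s ⟨hs.1, hs.2.trans (exceedanceTime_mono hT (le_add_of_nonneg_right hε))⟩

end Comparison

namespace MeasureTheory

lemma TendstoInMeasure.zero_of_ae_norm_le_of_norm_lt {α ι F : Type*} [MeasurableSpace α]
    {μ : Measure α} {l : Filter ι} [SeminormedAddCommGroup F] {f g : ι → α → F} {ε : ℝ}
    (hε : 0 < ε) (hg : TendstoInMeasure μ g l fun _ => 0)
    (hfg : ∀ i, ∀ᵐ x ∂μ, ‖g i x‖ < ε → ‖f i x‖ ≤ ‖g i x‖) :
    TendstoInMeasure μ f l fun _ => 0 := by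
  rw [tendstoInMeasure_iff_norm] at hg ⊢
  intro δ hδ
  refine tendsto_of_tendsto_of_tendsto_of_le_of_le tendsto_const_nhds (hg _ (lt_min hε hδ))
    (fun _ => zero_le) fun i => measure_mono_ae ?_
  filter_upwards [hfg i] with x hx (hδx : δ ≤ ‖f i x - 0‖)
  show min ε δ ≤ ‖g i x - 0‖
  rw [sub_zero] at hδx ⊢
  by_contra! hgx
  have hfx := hx (hgx.trans_le (min_le_left _ _))
  linarith [min_le_right ε δ]

end MeasureTheory

theorem stmt_3_general
    {Ω : Type*} [MeasurableSpace Ω] (P : Measure Ω)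
    {E : Type*} [NormedAddCommGroup E]
    (T : ℝ)
    -- the explosion times σ_n (n ∈ ℕ) and σ_∞
    (σ : ℕ → Ω → ℝ) (σi : Ω → ℝ)
    (hσmem : ∀ n ω, σ n ω ∈ Set.Ioc 0 T) (hσimem : ∀ ω, σi ω ∈ Set.Ioc 0 T)
    -- the processes X_n (n ∈ ℕ) and X_∞, jointly measurable
    (X : ℕ → ℝ → Ω → E) (Xi : ℝ → Ω → E)
    -- path continuity on [0, σ_n(ω)), and on [0,T] if σ_n(ω) = T
    (hXcont : ∀ n ω, ContinuousOn (fun t => X n t ω) (Set.Ico 0 (σ n ω)))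
    (hXicont : ∀ ω, ContinuousOn (fun t => Xi t ω) (Set.Ico 0 (σi ω)))
    -- σ_n is an explosion time: on {σ_n < T}, limsup_{t ↑ σ_n} ‖X_n(t)‖ = ∞
    (hexpl : ∀ n ω, σ n ω < T →
      ∀ M : ℝ, ∃ᶠ t in nhdsWithin (σ n ω) (Set.Iio (σ n ω)), M < ‖X n t ω‖)
    (hexpli : ∀ ω, σi ω < T →
      ∀ M : ℝ, ∃ᶠ t in nhdsWithin (σi ω) (Set.Iio (σi ω)), M < ‖Xi t ω‖)
    -- the stopping times ρ_n^{(r)} = inf { t ∈ (0, σ_n) : ‖X_n(t)‖ > r }, inf ∅ := T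
    (ρ : ℕ → ℝ → Ω → ℝ) (ρi : ℝ → Ω → ℝ)
    (hρ : ∀ n r ω, ρ n r ω = sInf ({t : ℝ | t ∈ Set.Ioo 0 (σ n ω) ∧ r < ‖X n t ω‖} ∪ {T}))
    (hρi : ∀ r ω, ρi r ω = sInf ({t : ℝ | t ∈ Set.Ioo 0 (σi ω) ∧ r < ‖Xi t ω‖} ∪ {T}))
    -- the globally defined processes X_n^{(r)} (denoted Y n r) and X_∞^{(r)} (denoted Yi r)
    (Y : ℕ → ℝ → ℝ → Ω → E) (Yi : ℝ → ℝ → Ω → E)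
    (hYcont : ∀ n r ω, Continuous fun t => Y n r t ω)
    (hYicont : ∀ r ω, Continuous fun t => Yi r t ω)
    -- assumption (a)
    (ha : ∀ n r, 0 < r → ∀ᵐ ω ∂P, ∀ t ∈ Set.Icc 0 (ρ n r ω), Y n r t ω = X n t ω)
    (hai : ∀ r, 0 < r → ∀ᵐ ω ∂P, ∀ t ∈ Set.Icc 0 (ρi r ω), Yi r t ω = Xi t ω)
    -- assumption (b): X_n^{(r)} → X_∞^{(r)} in L⁰(Ω; C([0,T]; E))
    (hb : ∀ r, 0 < r → TendstoInMeasure P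
      (fun n ω => ⨆ t : Set.Icc (0:ℝ) T, ‖Y n r (t : ℝ) ω - Yi r (t : ℝ) ω‖)
      atTop (fun _ => (0 : ℝ)))    :
    ∀ r > (0:ℝ), ∀ ε > (0:ℝ),
      TendstoInMeasure P
        (fun n ω => ⨆ t : Set.Icc (0:ℝ) T,
          ‖Set.indicator (Set.Icc 0 (min (ρi r ω) (ρ n (r + ε) ω))) (fun s => X n s ω) (t : ℝ)
            - Set.indicator (Set.Icc 0 (ρi r ω)) (fun s => Xi s ω) (t : ℝ)‖)
        atTop (fun _ => (0 : ℝ)) := by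
  intro r hr ε hε
  have hrε : 0 < r + ε := add_pos hr hε
  refine (hb (r + ε) hrε).zero_of_ae_norm_le_of_norm_lt hε fun n => ?_
  filter_upwards [ha n (r + ε) hrε, hai (r + ε) hrε] with ω hYX hYXi hsup
  have hYsup_nonneg : 0 ≤ ⨆ t : Icc (0 : ℝ) T, ‖Y n (r + ε) t ω - Yi (r + ε) t ω‖ :=
    Real.iSup_nonneg fun _ => norm_nonneg _
  rw [Real.norm_of_nonneg hYsup_nonneg] at hsup ⊢
  rw [Real.norm_of_nonneg (Real.iSup_nonneg fun _ => norm_nonneg _), hρ, hρi]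
  rw [hρ] at hYX
  rw [hρi] at hYXi
  exact iSup_norm_indicator_sub_le (hσmem n ω) (hXcont n ω) (hexpl n ω) (hσimem ω) (hXicont ω)
    (hexpli ω) hYX hYXi (hYcont n _ ω).continuousOn (hYicont _ ω).continuousOn hsup

theorem stmt_3
    {Ω : Type*} [MeasurableSpace Ω] (P : Measure Ω) [IsProbabilityMeasure P]
    {E : Type*} [NormedAddCommGroup E] [NormedSpace ℝ E] [CompleteSpace E]
    [MeasurableSpace E] [BorelSpace E]
    (T : ℝ) (hT : 0 < T)
    -- the explosion times σ_n (n ∈ ℕ) and σ_∞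
    (σ : ℕ → Ω → ℝ) (σi : Ω → ℝ)
    (hσmeas : ∀ n, Measurable (σ n)) (hσimeas : Measurable σi)
    (hσmem : ∀ n ω, σ n ω ∈ Set.Ioc 0 T) (hσimem : ∀ ω, σi ω ∈ Set.Ioc 0 T)
    -- the processes X_n (n ∈ ℕ) and X_∞, jointly measurable
    (X : ℕ → ℝ → Ω → E) (Xi : ℝ → Ω → E)
    (hXmeas : ∀ n, Measurable fun p : ℝ × Ω => X n p.1 p.2)
    (hXimeas : Measurable fun p : ℝ × Ω => Xi p.1 p.2)
    -- path continuity on [0, σ_n(ω)), and on [0,T] if σ_n(ω) = T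
    (hXcont : ∀ n ω, ContinuousOn (fun t => X n t ω) (Set.Ico 0 (σ n ω)))
    (hXcontT : ∀ n ω, σ n ω = T → ContinuousOn (fun t => X n t ω) (Set.Icc 0 T))
    (hXicont : ∀ ω, ContinuousOn (fun t => Xi t ω) (Set.Ico 0 (σi ω)))
    (hXicontT : ∀ ω, σi ω = T → ContinuousOn (fun t => Xi t ω) (Set.Icc 0 T))
    -- σ_n is an explosion time: on {σ_n < T}, limsup_{t ↑ σ_n} ‖X_n(t)‖ = ∞
    (hexpl : ∀ n ω, σ n ω < T →
      ∀ M : ℝ, ∃ᶠ t in nhdsWithin (σ n ω) (Set.Iio (σ n ω)), M < ‖X n t ω‖)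
    (hexpli : ∀ ω, σi ω < T →
      ∀ M : ℝ, ∃ᶠ t in nhdsWithin (σi ω) (Set.Iio (σi ω)), M < ‖Xi t ω‖)
    -- the stopping times ρ_n^{(r)} = inf { t ∈ (0, σ_n) : ‖X_n(t)‖ > r }, inf ∅ := T
    (ρ : ℕ → ℝ → Ω → ℝ) (ρi : ℝ → Ω → ℝ)
    (hρ : ∀ n r ω, ρ n r ω = sInf ({t : ℝ | t ∈ Set.Ioo 0 (σ n ω) ∧ r < ‖X n t ω‖} ∪ {T}))
    (hρi : ∀ r ω, ρi r ω = sInf ({t : ℝ | t ∈ Set.Ioo 0 (σi ω) ∧ r < ‖Xi t ω‖} ∪ {T}))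
    -- the globally defined processes X_n^{(r)} (denoted Y n r) and X_∞^{(r)} (denoted Yi r)
    (Y : ℕ → ℝ → ℝ → Ω → E) (Yi : ℝ → ℝ → Ω → E)
    (hYmeas : ∀ n r, Measurable fun p : ℝ × Ω => Y n r p.1 p.2)
    (hYimeas : ∀ r, Measurable fun p : ℝ × Ω => Yi r p.1 p.2)
    (hYcont : ∀ n r ω, Continuous fun t => Y n r t ω)
    (hYicont : ∀ r ω, Continuous fun t => Yi r t ω)
    -- assumption (a)
    (ha : ∀ n r, 0 < r → ∀ᵐ ω ∂P, ∀ t ∈ Set.Icc 0 (ρ n r ω), Y n r t ω = X n t ω)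
    (hai : ∀ r, 0 < r → ∀ᵐ ω ∂P, ∀ t ∈ Set.Icc 0 (ρi r ω), Yi r t ω = Xi t ω)
    -- assumption (b): X_n^{(r)} → X_∞^{(r)} in L⁰(Ω; C([0,T]; E))
    (hb : ∀ r, 0 < r → TendstoInMeasure P
      (fun n ω => ⨆ t : Set.Icc (0:ℝ) T, ‖Y n r (t : ℝ) ω - Yi r (t : ℝ) ω‖)
      atTop (fun _ => (0 : ℝ)))    :
    ∀ r > (0:ℝ), ∀ ε > (0:ℝ),
      TendstoInMeasure P
        (fun n ω => ⨆ t : Set.Icc (0:ℝ) T,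
          ‖Set.indicator (Set.Icc 0 (min (ρi r ω) (ρ n (r + ε) ω))) (fun s => X n s ω) (t : ℝ)
            - Set.indicator (Set.Icc 0 (ρi r ω)) (fun s => Xi s ω) (t : ℝ)‖)
        atTop (fun _ => (0 : ℝ)) :=
  stmt_3_general P T σ σi hσmem hσimem X Xi hXcont hXicont hexpl hexpli ρ ρi hρ hρi Y Yi hYcont
    hYicont ha hai hb
end
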